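/- The function H attains its minimum over S (i.e., there exists x̄ ∈ S with H(x̄) ≤ H(x) for all x ∈ S) under either of the following assumptions: (i) there exists α > inf{H(x) : x ∈ S} such that N(I,J,α) is precompact (has compact closure); (ii) X is a reflexive Banach space, S and Θ_j for every j ∈ J are weakly closed, and there exists α > inf{H(x) : x ∈ S} such that N(I,J,α) is bounded. -/

import Mathlib

open Set Pointwise Filter Topology Bornology Function

variable {X : Type*} [NormedAddCommGroup X] [NormedSpace ℝ X]

/-- The Minkowski gauge of `F`: `ρ_F(x) = inf {t ≥ 0 : x ∈ t • F}`. -/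
noncomputable def rhoF (F : Set X) (x : X) : ℝ :=
  sInf {t : ℝ | 0 ≤ t ∧ x ∈ t • F}

/-- The maximal time function `C_F(x; Q) = sup {ρ_F(q - x) : q ∈ Q}`. -/
noncomputable def maxTime (F Q : Set X) (x : X) : ℝ :=
  sSup ((fun q => rhoF F (q - x)) '' Q)

/-- The minimal time function `T_F(x; Θ) = inf {ρ_F(q - x) : q ∈ Θ}`. -/
noncomputable def minTime (F Θ : Set X) (x : X) : ℝ :=
  sInf ((fun q => rhoF F (q - x)) '' Θ)

/-- `G(x) = max {C_F(x; Ω_i), T_F(x; Θ_j) : i ∈ I, j ∈ J}`. -/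
noncomputable def GFun {ι κ : Type*} (F : Set X) (I : Finset ι) (J : Finset κ)
    (Ω : ι → Set X) (Θ : κ → Set X) (x : X) : ℝ :=
  sSup ((fun i => maxTime F (Ω i) x) '' ↑I ∪ (fun j => minTime F (Θ j) x) '' ↑J)

/-- `H(x) = Σ_{i∈I} C_F(x; Ω_i) + Σ_{j∈J} T_F(x; Θ_j)`. -/
noncomputable def HFun {ι κ : Type*} (F : Set X) (I : Finset ι) (J : Finset κ)
    (Ω : ι → Set X) (Θ : κ → Set X) (x : X) : ℝ :=
  ∑ i ∈ I, maxTime F (Ω i) x + ∑ j ∈ J, minTime F (Θ j) x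

/-- `N(I,J,α) = S ∩ [⋂_{i∈I} ⋂_{ω∈Ω_i} (ω - α•F)] ∩ [⋂_{j∈J} (Θ_j - α•F)]`. -/
def NSet {ι κ : Type*} (F : Set X) (I : Finset ι) (J : Finset κ)
    (Ω : ι → Set X) (Θ : κ → Set X) (S : Set X) (α : ℝ) : Set X :=
  S ∩ (⋂ i ∈ I, ⋂ ω ∈ Ω i, (({ω} : Set X) - α • F)) ∩ ⋂ j ∈ J, (Θ j - α • F)

/-- A set is weakly closed if it is closed in the weak topology on `Y`. -/
def WeaklyClosed (Y : Type*) [NormedAddCommGroup Y] [NormedSpace ℝ Y] (A : Set Y) : Prop :=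
  IsClosed (toWeakSpace ℝ Y '' A)

/-- A normed space is reflexive if the canonical embedding into its double dual is surjective. -/
def IsReflexiveSpace (Y : Type*) [NormedAddCommGroup Y] [NormedSpace ℝ Y] : Prop :=
  Function.Surjective (NormedSpace.inclusionInDoubleDual ℝ Y)

/-! If `H x₀ < α` then the whole sublevel set `{x ∈ S | H x ≤ H x₀}` lies in `N(I,J,α)`: every
term of `H` is nonnegative, `C_F(x; Ω_i) < α` puts `x` in each `ω - α • F`, and `T_F(x; Θ_j) < α`
puts it in `Θ_j - α • F`. It therefore suffices that `H` be lower semicontinuous for a topology in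
which `S` is closed and `N(I,J,α)` has compact closure.

In case (i) this is the norm topology: `C_F(·; Ω)` is a supremum of continuous functions and
`T_F(·; Θ)` is Lipschitz, both because the gauge of a convex neighbourhood of `0` is Lipschitz.
In case (ii) it is the weak topology. Bounded sets of a reflexive space have weakly compact weak
closure (Banach–Alaoglu in the bidual); `x ↦ ρ_F(q - x)` is convex and continuous, hence weakly
lower semicontinuous; and `{T_F(·; Θ) ≤ c} = ⋂_{t > c} (Θ - t • F)` is weakly closed, each
`Θ - t • F` being a weakly closed set minus a weakly compact one. -/

section WeakTopology

variable {E : Type*} [AddCommGroup E] [TopologicalSpace E] [IsTopologicalAddGroup E]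
  [Module ℝ E] [ContinuousSMul ℝ E] [LocallyConvexSpace ℝ E]

theorem Convex.isClosed_toWeakSpace_image {C : Set E} (hC : Convex ℝ C) (hCc : IsClosed C) :
    IsClosed (toWeakSpace ℝ E '' C) := by
  rw [← hCc.closure_eq, hC.toWeakSpace_closure ℝ]
  exact isClosed_closure

theorem LowerSemicontinuous.comp_toWeakSpace_symm {g : E → ℝ} (hg : LowerSemicontinuous g)
    (hq : QuasiconvexOn ℝ univ g) : LowerSemicontinuous (g ∘ (toWeakSpace ℝ E).symm) := by
  refine lowerSemicontinuous_iff_isClosed_preimage.2 fun c => ?_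
  rw [preimage_comp, ← LinearEquiv.image_eq_preimage_symm]
  have hconv : Convex ℝ {x | g x ≤ c} := by simpa only [mem_univ, true_and] using hq c
  exact hconv.isClosed_toWeakSpace_image (hg.isClosed_preimage c)

end WeakTopology

theorem IsReflexiveSpace.isCompact_closure_toWeakSpace_image (hX : IsReflexiveSpace X)
    {A : Set X} (hA : IsBounded A) : IsCompact (closure (toWeakSpace ℝ X '' A)) := by
  refine NormedSpace.isCompact_closure_of_isBounded ℝ X _
    (by rwa [(toWeakSpace ℝ X).injective.preimage_image]) fun φ _ => ?_
  obtain ⟨x, hx⟩ := hX (WeakDual.toStrongDual φ)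
  exact ⟨toWeakSpace ℝ X x, hx⟩

theorem LowerSemicontinuous.exists_isMinOn_of_subset_isCompact {α β : Type*}
    [TopologicalSpace α] [LinearOrder β] {f : α → β} {S K : Set α} {x₀ : α}
    (hf : LowerSemicontinuous f) (hS : IsClosed S) (hx₀ : x₀ ∈ S) (hK : IsCompact K)
    (hsub : S ∩ f ⁻¹' Iic (f x₀) ⊆ K) : ∃ a ∈ S, IsMinOn f S a := by
  have hne : (S ∩ f ⁻¹' Iic (f x₀)).Nonempty := ⟨x₀, hx₀, le_rfl⟩
  have hsubc : IsCompact (S ∩ f ⁻¹' Iic (f x₀)) :=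
    hK.of_isClosed_subset (hS.inter (hf.isClosed_preimage _)) hsub
  obtain ⟨a, ⟨haS, hax₀⟩, hmin⟩ := (hf.lowerSemicontinuousOn _).exists_isMinOn hne hsubc
  refine ⟨a, haS, isMinOn_iff.2 fun x hx => ?_⟩
  rcases le_total (f x) (f x₀) with hxx₀ | hx₀x
  · exact isMinOn_iff.1 hmin x ⟨hx, hxx₀⟩
  · exact hax₀.trans hx₀x

theorem LipschitzWith.ciInf {α ι : Type*} [PseudoMetricSpace α] [Nonempty ι] {K : NNReal}
    {f : ι → α → ℝ} (hf : ∀ i, LipschitzWith K (f i))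
    (hbdd : ∀ x, BddBelow (range fun i => f i x)) : LipschitzWith K fun x => ⨅ i, f i x := by
  refine LipschitzWith.of_le_add_mul K fun x y => ?_
  rw [← sub_le_iff_le_add]
  refine le_ciInf fun i => ?_
  rw [sub_le_iff_le_add]
  exact (ciInf_le (hbdd x) i).trans ((hf i).le_add_mul x y)

section Gauge

variable {F : Set X}

theorem rhoF_nonneg (x : X) : 0 ≤ rhoF F x :=
  Real.sInf_nonneg fun _ ht => ht.1

theorem rhoF_eq_gauge (h0 : (0 : X) ∈ F) : rhoF F = gauge F := by
  funext x
  rcases eq_or_ne x 0 with rfl | hx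
  · rw [gauge_zero]
    refine le_antisymm (csInf_le ⟨0, fun t ht => ht.1⟩ ⟨le_rfl, ?_⟩) (rhoF_nonneg 0)
    rw [zero_smul_set ⟨0, h0⟩]
    rfl
  · unfold rhoF gauge
    congr 1
    ext t
    refine ⟨fun ⟨ht, hxt⟩ => ⟨ht.lt_of_ne ?_, hxt⟩, fun ⟨ht, hxt⟩ => ⟨ht.le, hxt⟩⟩
    rintro rfl
    rw [zero_smul_set ⟨0, h0⟩] at hxt
    exact hx hxt

theorem continuous_gauge_sub (hF : Convex ℝ F) (hF0 : F ∈ 𝓝 (0 : X)) (q : X) :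
    Continuous fun x => gauge F (q - x) :=
  (continuous_gauge hF hF0).comp (continuous_const.sub continuous_id)

theorem convexOn_gauge (hF : Convex ℝ F) (habs : Absorbent ℝ F) : ConvexOn ℝ univ (gauge F) :=
  ⟨convex_univ, fun x _ y _ a b ha hb _ => by
    simpa only [gauge_smul_of_nonneg ha, gauge_smul_of_nonneg hb, smul_eq_mul]
      using gauge_add_le hF habs (a • x) (b • y)⟩

theorem mem_smul_of_gauge_lt (hF : Convex ℝ F) (h0 : (0 : X) ∈ F) (habs : Absorbent ℝ F)
    {x : X} {t : ℝ} (h : gauge F x < t) : x ∈ t • F := by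
  have ht : 0 < t := (gauge_nonneg x).trans_lt h
  rw [mem_smul_set_iff_inv_smul_mem₀ ht.ne']
  refine setOfPred_gauge_lt_one_subset_self hF h0 habs ?_
  rw [mem_ofPred_eq, gauge_smul_of_nonneg (inv_nonneg.2 ht.le), smul_eq_mul]
  exact (inv_mul_lt_one₀ ht).2 h

end Gauge

section TimeFunctions

variable {F Q : Set X}

theorem maxTime_nonneg (x : X) : 0 ≤ maxTime F Q x :=
  Real.sSup_nonneg <| forall_mem_image.2 fun _ _ => rhoF_nonneg _

theorem minTime_nonneg (x : X) : 0 ≤ minTime F Q x :=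
  Real.sInf_nonneg <| forall_mem_image.2 fun _ _ => rhoF_nonneg _

theorem maxTime_eq_iSup (h0 : (0 : X) ∈ F) (x : X) :
    maxTime F Q x = ⨆ q : Q, gauge F (q - x) := by
  rw [maxTime, rhoF_eq_gauge h0, sSup_image']

theorem minTime_eq_iInf (h0 : (0 : X) ∈ F) (x : X) :
    minTime F Q x = ⨅ q : Q, gauge F (q - x) := by
  rw [minTime, rhoF_eq_gauge h0, sInf_image']

theorem bddAbove_range_gauge_sub (hF : Convex ℝ F) (hF0 : F ∈ 𝓝 (0 : X)) (hQ : IsBounded Q)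
    (x : X) : BddAbove (range fun q : Q => gauge F (q - x)) := by
  obtain ⟨K, hK⟩ := hF.lipschitz_gauge hF0
  rw [← image_eq_range (fun q => gauge F (q - x))]
  exact ((hK.comp (IsometryEquiv.subRight x).isometry.lipschitz).isBounded_image hQ).bddAbove

theorem bddBelow_range_gauge_sub (x : X) : BddBelow (range fun q : Q => gauge F (q - x)) :=
  ⟨0, forall_mem_range.2 fun _ => gauge_nonneg _⟩

theorem gauge_sub_le_maxTime (hF : Convex ℝ F) (hF0 : F ∈ 𝓝 (0 : X)) (hQ : IsBounded Q)
    {q : X} (hq : q ∈ Q) (x : X) : gauge F (q - x) ≤ maxTime F Q x := by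
  rw [maxTime_eq_iSup (mem_of_mem_nhds hF0)]
  exact le_ciSup (bddAbove_range_gauge_sub hF hF0 hQ x) ⟨q, hq⟩

theorem minTime_le_gauge_sub (h0 : (0 : X) ∈ F) {q : X} (hq : q ∈ Q) (x : X) :
    minTime F Q x ≤ gauge F (q - x) := by
  rw [minTime_eq_iInf h0]
  exact ciInf_le (bddBelow_range_gauge_sub x) ⟨q, hq⟩

theorem exists_gauge_sub_lt_of_minTime_lt (h0 : (0 : X) ∈ F) (hQ : Q.Nonempty) {x : X} {t : ℝ}
    (h : minTime F Q x < t) : ∃ q ∈ Q, gauge F (q - x) < t := by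
  have : Nonempty Q := hQ.to_subtype
  rw [minTime_eq_iInf h0] at h
  obtain ⟨⟨q, hq⟩, hqt⟩ := exists_lt_of_ciInf_lt h
  exact ⟨q, hq, hqt⟩

theorem lowerSemicontinuous_maxTime_comp {Y : Type*} [TopologicalSpace Y] {e : Y → X}
    (hF : Convex ℝ F) (hF0 : F ∈ 𝓝 (0 : X)) (hQ : IsBounded Q)
    (he : ∀ q, LowerSemicontinuous fun y => gauge F (q - e y)) :
    LowerSemicontinuous (maxTime F Q ∘ e) := by
  have hsup : maxTime F Q ∘ e = fun y => ⨆ q : Q, gauge F (q - e y) :=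
    funext fun y => maxTime_eq_iSup (mem_of_mem_nhds hF0) (e y)
  rw [hsup]
  exact lowerSemicontinuous_ciSup (fun y => bddAbove_range_gauge_sub hF hF0 hQ (e y))
    fun q => he q

theorem continuous_minTime (hF : Convex ℝ F) (hF0 : F ∈ 𝓝 (0 : X)) (hQ : Q.Nonempty) :
    Continuous (minTime F Q) := by
  have : Nonempty Q := hQ.to_subtype
  obtain ⟨K, hK⟩ := hF.lipschitz_gauge hF0
  rw [funext (minTime_eq_iInf (mem_of_mem_nhds hF0))]
  refine (LipschitzWith.ciInf (K := K * 1) (fun q => ?_) bddBelow_range_gauge_sub).continuous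
  exact hK.comp (IsometryEquiv.subLeft (q : X)).isometry.lipschitz

theorem setOf_minTime_le_eq (hF : Convex ℝ F) (hF0 : F ∈ 𝓝 (0 : X)) (hQ : Q.Nonempty) {c : ℝ}
    (hc : 0 ≤ c) : {x | minTime F Q x ≤ c} = ⋂ t ∈ Ioi c, Q - t • F := by
  have h0 : (0 : X) ∈ F := mem_of_mem_nhds hF0
  ext x
  simp only [mem_ofPred_eq, mem_iInter₂, mem_Ioi]
  constructor
  · intro hx t ht
    obtain ⟨q, hq, hqt⟩ := exists_gauge_sub_lt_of_minTime_lt h0 hQ (hx.trans_lt ht)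
    exact ⟨q, hq, q - x, mem_smul_of_gauge_lt hF h0 (absorbent_nhds_zero hF0) hqt,
      sub_sub_cancel q x⟩
  · intro hx
    refine le_of_forall_gt_imp_ge_of_dense fun t ht => ?_
    obtain ⟨q, hq, y, hy, rfl⟩ := hx t ht
    calc minTime F Q (q - y) ≤ gauge F (q - (q - y)) := minTime_le_gauge_sub h0 hq _
      _ = gauge F y := by rw [sub_sub_cancel]
      _ ≤ t := gauge_le_of_mem (hc.trans ht.le) hy

theorem lowerSemicontinuous_gauge_sub_comp_toWeakSpace_symm (hF : Convex ℝ F)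
    (hF0 : F ∈ 𝓝 (0 : X)) (q : X) :
    LowerSemicontinuous fun y => gauge F (q - (toWeakSpace ℝ X).symm y) := by
  have hconv : ConvexOn ℝ univ fun x => gauge F (q - x) := by
    simpa [Function.comp_def, sub_eq_add_neg] using
      ((convexOn_gauge hF (absorbent_nhds_zero hF0)).translate_right q).comp_linearMap
        (-LinearMap.id)
  exact (continuous_gauge_sub hF hF0 q).lowerSemicontinuous.comp_toWeakSpace_symm
    hconv.quasiconvexOn

theorem lowerSemicontinuous_minTime_comp_toWeakSpace_symm (hX : IsReflexiveSpace X)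
    (hF : Convex ℝ F) (hFc : IsClosed F) (hFb : IsBounded F) (hF0 : F ∈ 𝓝 (0 : X))
    (hQ : Q.Nonempty) (hQw : WeaklyClosed X Q) :
    LowerSemicontinuous (minTime F Q ∘ (toWeakSpace ℝ X).symm) := by
  refine lowerSemicontinuous_iff_isClosed_preimage.2 fun c => ?_
  rcases lt_or_ge c 0 with hc | hc
  · convert isClosed_empty
    exact eq_empty_of_forall_notMem fun y hy => (hc.trans_le (minTime_nonneg _)).not_ge hy
  rw [preimage_comp, ← LinearEquiv.image_eq_preimage_symm]
  change IsClosed (toWeakSpace ℝ X '' {x | minTime F Q x ≤ c})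
  rw [setOf_minTime_le_eq hF hF0 hQ hc, image_iInter₂ (toWeakSpace ℝ X).bijective]
  refine isClosed_biInter fun t ht => ?_
  have ht0 : t ≠ 0 := (hc.trans_lt ht).ne'
  have htF : IsCompact (toWeakSpace ℝ X '' (t • F)) := by
    have hcl := (hF.smul t).isClosed_toWeakSpace_image (hFc.smul_of_ne_zero ht0)
    simpa only [hcl.closure_eq] using hX.isCompact_closure_toWeakSpace_image (hFb.smul₀ t)
  rw [image_sub, sub_eq_add_neg]
  exact hQw.add_right_of_isCompact htF.neg

end TimeFunctions

section HFun

variable {ι κ : Type*} {F : Set X} {I : Finset ι} {J : Finset κ} {Ω : ι → Set X}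
  {Θ : κ → Set X} {S : Set X}

theorem maxTime_le_HFun {i : ι} (hi : i ∈ I) (x : X) :
    maxTime F (Ω i) x ≤ HFun F I J Ω Θ x :=
  (Finset.single_le_sum (fun _ _ => maxTime_nonneg x) hi).trans
    (le_add_of_nonneg_right (Finset.sum_nonneg fun _ _ => minTime_nonneg x))

theorem minTime_le_HFun {j : κ} (hj : j ∈ J) (x : X) :
    minTime F (Θ j) x ≤ HFun F I J Ω Θ x :=
  (Finset.single_le_sum (fun _ _ => minTime_nonneg x) hj).trans
    (le_add_of_nonneg_left (Finset.sum_nonneg fun _ _ => maxTime_nonneg x))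

theorem mem_NSet_of_HFun_lt (hF : Convex ℝ F) (hF0 : F ∈ 𝓝 (0 : X))
    (hΩb : ∀ i ∈ I, IsBounded (Ω i)) (hΘne : ∀ j ∈ J, (Θ j).Nonempty) {α : ℝ} {x : X}
    (hxS : x ∈ S) (hx : HFun F I J Ω Θ x < α) : x ∈ NSet F I J Ω Θ S α := by
  have h0 : (0 : X) ∈ F := mem_of_mem_nhds hF0
  have habs : Absorbent ℝ F := absorbent_nhds_zero hF0
  refine ⟨⟨hxS, mem_iInter₂.2 fun i hi => mem_iInter₂.2 fun ω hω => ?_⟩,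
    mem_iInter₂.2 fun j hj => ?_⟩
  · have hωx : gauge F (ω - x) < α :=
      ((gauge_sub_le_maxTime hF hF0 (hΩb i hi) hω x).trans (maxTime_le_HFun hi x)).trans_lt hx
    exact ⟨ω, rfl, ω - x, mem_smul_of_gauge_lt hF h0 habs hωx, sub_sub_cancel ω x⟩
  · obtain ⟨q, hq, hqx⟩ :=
      exists_gauge_sub_lt_of_minTime_lt h0 (hΘne j hj) ((minTime_le_HFun hj x).trans_lt hx)
    exact ⟨q, hq, q - x, mem_smul_of_gauge_lt hF h0 habs hqx, sub_sub_cancel q x⟩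

theorem exists_sublevel_subset_NSet (hF : Convex ℝ F) (hF0 : F ∈ 𝓝 (0 : X))
    (hΩb : ∀ i ∈ I, IsBounded (Ω i)) (hΘne : ∀ j ∈ J, (Θ j).Nonempty) (hS : S.Nonempty)
    {α : ℝ} (hα : sInf (HFun F I J Ω Θ '' S) < α) :
    ∃ x₀ ∈ S, S ∩ HFun F I J Ω Θ ⁻¹' Iic (HFun F I J Ω Θ x₀) ⊆ NSet F I J Ω Θ S α := by
  obtain ⟨_, ⟨x₀, hx₀, rfl⟩, hx₀α⟩ := exists_lt_of_csInf_lt (hS.image _) hα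
  exact ⟨x₀, hx₀, fun x ⟨hxS, hx⟩ =>
    mem_NSet_of_HFun_lt hF hF0 hΩb hΘne hxS ((mem_Iic.1 hx).trans_lt hx₀α)⟩

theorem lowerSemicontinuous_HFun_comp {Y : Type*} [TopologicalSpace Y] {e : Y → X}
    (hmax : ∀ i ∈ I, LowerSemicontinuous (maxTime F (Ω i) ∘ e))
    (hmin : ∀ j ∈ J, LowerSemicontinuous (minTime F (Θ j) ∘ e)) :
    LowerSemicontinuous (HFun F I J Ω Θ ∘ e) :=
  (lowerSemicontinuous_sum hmax).add (lowerSemicontinuous_sum hmin)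

theorem exists_isMinOn_HFun_of_isCompact_closure (hF : Convex ℝ F) (hF0 : F ∈ 𝓝 (0 : X))
    (hΩb : ∀ i ∈ I, IsBounded (Ω i)) (hΘne : ∀ j ∈ J, (Θ j).Nonempty) (hS : S.Nonempty)
    (hSc : IsClosed S) {α : ℝ} (hα : sInf (HFun F I J Ω Θ '' S) < α)
    (hN : IsCompact (closure (NSet F I J Ω Θ S α))) :
    ∃ a ∈ S, IsMinOn (HFun F I J Ω Θ) S a := by
  obtain ⟨x₀, hx₀, hsub⟩ := exists_sublevel_subset_NSet hF hF0 hΩb hΘne hS hα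
  have hH : LowerSemicontinuous (HFun F I J Ω Θ) :=
    lowerSemicontinuous_HFun_comp (e := id)
      (fun i hi => lowerSemicontinuous_maxTime_comp hF hF0 (hΩb i hi) fun q =>
        (continuous_gauge_sub hF hF0 q).lowerSemicontinuous)
      (fun j hj => (continuous_minTime hF hF0 (hΘne j hj)).lowerSemicontinuous)
  exact hH.exists_isMinOn_of_subset_isCompact hSc hx₀ hN (hsub.trans subset_closure)

theorem exists_isMinOn_HFun_of_isReflexiveSpace (hX : IsReflexiveSpace X) (hF : Convex ℝ F)
    (hFc : IsClosed F) (hFb : IsBounded F) (hF0 : F ∈ 𝓝 (0 : X))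
    (hΩb : ∀ i ∈ I, IsBounded (Ω i)) (hΘne : ∀ j ∈ J, (Θ j).Nonempty)
    (hΘw : ∀ j ∈ J, WeaklyClosed X (Θ j)) (hS : S.Nonempty) (hSw : WeaklyClosed X S) {α : ℝ}
    (hα : sInf (HFun F I J Ω Θ '' S) < α) (hN : IsBounded (NSet F I J Ω Θ S α)) :
    ∃ a ∈ S, IsMinOn (HFun F I J Ω Θ) S a := by
  set e := toWeakSpace ℝ X
  obtain ⟨x₀, hx₀, hsub⟩ := exists_sublevel_subset_NSet hF hF0 hΩb hΘne hS hα
  have hH : LowerSemicontinuous (HFun F I J Ω Θ ∘ e.symm) :=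
    lowerSemicontinuous_HFun_comp
      (fun i hi => lowerSemicontinuous_maxTime_comp hF hF0 (hΩb i hi)
        (lowerSemicontinuous_gauge_sub_comp_toWeakSpace_symm hF hF0))
      (fun j hj => lowerSemicontinuous_minTime_comp_toWeakSpace_symm hX hF hFc hFb hF0
        (hΘne j hj) (hΘw j hj))
  have hsub' : e '' S ∩ (HFun F I J Ω Θ ∘ e.symm) ⁻¹' Iic ((HFun F I J Ω Θ ∘ e.symm) (e x₀)) ⊆
      closure (e '' NSet F I J Ω Θ S α) := by
    rintro _ ⟨⟨x, hxS, rfl⟩, hx⟩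
    exact subset_closure ⟨x, hsub ⟨hxS, by simpa using hx⟩, rfl⟩
  obtain ⟨_, ⟨a, haS, rfl⟩, hmin⟩ := hH.exists_isMinOn_of_subset_isCompact hSw
    (mem_image_of_mem e hx₀) (hX.isCompact_closure_toWeakSpace_image hN) hsub'
  refine ⟨a, haS, isMinOn_iff.2 fun x hxS => ?_⟩
  simpa [e] using isMinOn_iff.1 hmin (e x) (mem_image_of_mem e hxS)

end HFun

theorem stmt3_general
    {ι κ : Type*} (F : Set X) (I : Finset ι) (J : Finset κ)
    (Ω : ι → Set X) (Θ : κ → Set X) (S : Set X)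
    (hFc : IsClosed F) (hFb : IsBounded F) (hFconv : Convex ℝ F)
    (hF0 : (0 : X) ∈ interior F)
    (hΩb : ∀ i ∈ I, IsBounded (Ω i))
    (hΘne : ∀ j ∈ J, (Θ j).Nonempty)
    (hSne : S.Nonempty) (hSc : IsClosed S)
    (hyp :
      (∃ α : ℝ, sInf (HFun F I J Ω Θ '' S) < α ∧
        IsCompact (closure (NSet F I J Ω Θ S α))) ∨
      (CompleteSpace X ∧ IsReflexiveSpace X ∧ WeaklyClosed X S ∧
        (∀ j ∈ J, WeaklyClosed X (Θ j)) ∧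
        ∃ α : ℝ, sInf (HFun F I J Ω Θ '' S) < α ∧
          IsBounded (NSet F I J Ω Θ S α))) :
    ∃ xbar ∈ S, ∀ x ∈ S, HFun F I J Ω Θ xbar ≤ HFun F I J Ω Θ x := by
  have hF : F ∈ 𝓝 (0 : X) := mem_interior_iff_mem_nhds.1 hF0
  obtain ⟨a, haS, hmin⟩ : ∃ a ∈ S, IsMinOn (HFun F I J Ω Θ) S a := by
    rcases hyp with ⟨α, hα, hN⟩ | ⟨-, hX, hSw, hΘw, α, hα, hN⟩
    · exact exists_isMinOn_HFun_of_isCompact_closure hFconv hF hΩb hΘne hSne hSc hα hN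
    · exact exists_isMinOn_HFun_of_isReflexiveSpace hX hFconv hFc hFb hF hΩb hΘne hΘw hSne
        hSw hα hN
  exact ⟨a, haS, isMinOn_iff.1 hmin⟩

/-- Proposition 2.4. -/
theorem stmt3
    {ι κ : Type*} (F : Set X) (I : Finset ι) (J : Finset κ)
    (Ω : ι → Set X) (Θ : κ → Set X) (S : Set X)
    (hFc : IsClosed F) (hFb : IsBounded F) (hFconv : Convex ℝ F)
    (hF0 : (0 : X) ∈ interior F)
    (hΩne : ∀ i ∈ I, (Ω i).Nonempty) (hΩc : ∀ i ∈ I, IsClosed (Ω i))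
    (hΩb : ∀ i ∈ I, IsBounded (Ω i))
    (hΘne : ∀ j ∈ J, (Θ j).Nonempty) (hΘc : ∀ j ∈ J, IsClosed (Θ j))
    (hSne : S.Nonempty) (hSc : IsClosed S)
    (hIJ : I.Nonempty ∨ J.Nonempty)
    (hyp :
      (∃ α : ℝ, sInf (HFun F I J Ω Θ '' S) < α ∧
        IsCompact (closure (NSet F I J Ω Θ S α))) ∨
      (CompleteSpace X ∧ IsReflexiveSpace X ∧ WeaklyClosed X S ∧
        (∀ j ∈ J, WeaklyClosed X (Θ j)) ∧
        ∃ α : ℝ, sInf (HFun F I J Ω Θ '' S) < α ∧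
          IsBounded (NSet F I J Ω Θ S α))) :
    ∃ xbar ∈ S, ∀ x ∈ S, HFun F I J Ω Θ xbar ≤ HFun F I J Ω Θ x :=
  stmt3_general F I J Ω Θ S hFc hFb hFconv hF0 hΩb hΘne hSne hSc hyp
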